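/- Let A and B be countable weakly oligomorphic relational structures over the same language. Then the following are equivalent: (1) A and B are homomorphism-equivalent; (2) Age(A) projects onto Age(B) and Age(B) projects onto Age(A); (3) CSP(A) = CSP(B), i.e. a finite structure admits a homomorphism to A if and only if it admits a homomorphism to B. -/

import Mathlib

open FirstOrder FirstOrder.Language FirstOrder.Language.Structure CategoryTheory

universe u v w w' w'' w'''

/-- A first-order homomorphism is an embedding if it agrees pointwise with some embedding. -/
def IsHomEmbedding {L : FirstOrder.Language} {M N : Type*} [L.Structure M] [L.Structure N]
    (f : M →[L] N) : Prop :=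
  ∃ e : M ↪[L] N, ∀ x, e x = f x

/-- A structure is weakly oligomorphic if for every arity `n` there are only finitely many
relations on `n`-tuples invariant under all endomorphisms. -/
def WeaklyOligomorphic (L : FirstOrder.Language) (M : Type*) [L.Structure M] : Prop :=
  ∀ n : ℕ, {ρ : Set (Fin n → M) | ∀ f : M →[L] M, ∀ a ∈ ρ, f ∘ a ∈ ρ}.Finite

/-- A structure is homomorphism-homogeneous if every homomorphism from a finite substructure
into the structure extends to an endomorphism. -/
def HomHomogeneous (L : FirstOrder.Language) (M : Type*) [L.Structure M] : Prop :=
  ∀ S : L.Substructure M, (S : Set M).Finite →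
    ∀ f : S →[L] M, ∃ g : M →[L] M, ∀ x : S, g (x : M) = f x

/-- A structure is weakly homomorphism-homogeneous if for finite substructures `B ≤ C`, every
homomorphism from `B` into the structure extends to a homomorphism from `C`. -/
def WeaklyHomHomogeneous (L : FirstOrder.Language) (M : Type*) [L.Structure M] : Prop :=
  ∀ (B C : L.Substructure M) (h : B ≤ C), (C : Set M).Finite →
    ∀ f : B →[L] M, ∃ g : C →[L] M, ∀ x : B, g (Substructure.inclusion h x) = f x

/-- The age of a structure: the class of all finite structures embeddable into it. -/
def Age.{u₁, v₁, w₁, w₂} (L : FirstOrder.Language.{u₁, v₁}) (M : Type w₂) [L.Structure M] :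
    Set (Bundled.{w₁} L.Structure) :=
  {N | Finite N ∧ Nonempty (N ↪[L] M)}

/-- A class of structures projects onto another if every member of the first admits a
homomorphism to some member of the second. -/
def ProjectsOnto (L : FirstOrder.Language.{u, v}) (C D : Set (Bundled.{w} L.Structure)) : Prop :=
  ∀ A ∈ C, ∃ B ∈ D, Nonempty (A →[L] B)

/-- The hereditary property: a class is closed under (isomorphic copies of) substructures of
its members, i.e. closed under embeddability. -/
def HasHP (L : FirstOrder.Language.{u, v}) (C : Set (Bundled.{w} L.Structure)) : Prop :=
  ∀ A ∈ C, ∀ B : Bundled.{w} L.Structure, Nonempty (B ↪[L] A) → B ∈ C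

/-- The joint embedding property. -/
def HasJEP (L : FirstOrder.Language.{u, v}) (C : Set (Bundled.{w} L.Structure)) : Prop :=
  ∀ A ∈ C, ∀ B ∈ C, ∃ D ∈ C, Nonempty (A ↪[L] D) ∧ Nonempty (B ↪[L] D)

/-- The amalgamation property. -/
def HasAP (L : FirstOrder.Language.{u, v}) (C : Set (Bundled.{w} L.Structure)) : Prop :=
  ∀ A ∈ C, ∀ B₁ ∈ C, ∀ B₂ ∈ C, ∀ (f₁ : A ↪[L] B₁) (f₂ : A ↪[L] B₂),
    ∃ D ∈ C, ∃ (g₁ : B₁ ↪[L] D) (g₂ : B₂ ↪[L] D), ∀ a, g₁ (f₁ a) = g₂ (f₂ a)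

/-- The homo-amalgamation property: for every homomorphism `f₁ : A → B₁` and every embedding
`f₂ : A ↪ B₂` within the class there are `D` in the class, an embedding `g₁ : B₁ ↪ D` and a
homomorphism `g₂ : B₂ → D` with `g₁ ∘ f₁ = g₂ ∘ f₂`. -/
def HasHAP (L : FirstOrder.Language.{u, v}) (C : Set (Bundled.{w} L.Structure)) : Prop :=
  ∀ A ∈ C, ∀ B₁ ∈ C, ∀ B₂ ∈ C, ∀ (f₁ : A →[L] B₁) (f₂ : A ↪[L] B₂),
    ∃ D ∈ C, ∃ (g₁ : B₁ ↪[L] D) (g₂ : B₂ →[L] D), ∀ a, g₁ (f₁ a) = g₂ (f₂ a)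

/-- Closure under isomorphism. -/
def IsoClosed (L : FirstOrder.Language.{u, v}) (C : Set (Bundled.{w} L.Structure)) : Prop :=
  ∀ A ∈ C, ∀ B : Bundled.{w} L.Structure, Nonempty (A ≃[L] B) → B ∈ C

/-- A structure is hom-irreducible in a class if every homomorphism from it to a member of
the class is an embedding. -/
def HomIrreducibleIn (L : FirstOrder.Language.{u, v}) (C : Set (Bundled.{w} L.Structure))
    (A : Type*) [L.Structure A] : Prop :=
  ∀ B ∈ C, ∀ f : A →[L] B, IsHomEmbedding f

/-- `CA L M` is the class of all finite structures in the age of `M` that are hom-irreducible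
in the age of `M`. -/
def CA.{u₁, v₁, w₁, w₂} (L : FirstOrder.Language.{u₁, v₁}) (M : Type w₂) [L.Structure M] :
    Set (Bundled.{w₁} L.Structure) :=
  {B | B ∈ Age.{u₁, v₁, w₁, w₂} L M ∧
    HomIrreducibleIn.{u₁, v₁, w₁, w₁} L (Age.{u₁, v₁, w₁, w₂} L M) B}

/-- `M ⪯_h N` : the age of `N` is contained in the age of `M`, and for all finite
substructures `A ≤ B` of `M`, every homomorphism from `A` to `N` extends to `B`. -/
def PrecH.{u₁, v₁, w₁, w₂, w₃} (L : FirstOrder.Language.{u₁, v₁}) (M : Type w₂) (N : Type w₃)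
    [L.Structure M] [L.Structure N] : Prop :=
  Age.{u₁, v₁, w₁, w₃} L N ⊆ Age.{u₁, v₁, w₁, w₂} L M ∧
  ∀ (A B : L.Substructure M) (h : A ≤ B), (B : Set M).Finite →
    ∀ f : A →[L] N, ∃ g : B →[L] N, ∀ x : A, g (Substructure.inclusion h x) = f x

/-- A structure is (ultra)homogeneous if every isomorphism between finite substructures
(i.e. every embedding of a finite substructure into the structure) extends to an
automorphism. -/
def Ultrahomogeneous (L : FirstOrder.Language) (M : Type*) [L.Structure M] : Prop :=
  ∀ S : L.Substructure M, (S : Set M).Finite →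
    ∀ f : S ↪[L] M, ∃ g : M ≃[L] M, ∀ x : S, g (x : M) = f x

/-- A structure is oligomorphic if for every `n` its automorphism group has finitely many
orbits on `n`-tuples. -/
def Oligomorphic (L : FirstOrder.Language) (M : Type*) [L.Structure M] : Prop :=
  ∀ n : ℕ, ∃ S : Set (Fin n → M), S.Finite ∧
    ∀ a : Fin n → M, ∃ b ∈ S, ∃ g : M ≃[L] M, (fun i => g (b i)) = a

/-- A structure is a core if every endomorphism is an embedding. -/
def IsCore (L : FirstOrder.Language) (M : Type*) [L.Structure M] : Prop :=
  ∀ f : M →[L] M, IsHomEmbedding f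

/-- A substructure `C` is a core of `M` if `C` is a core and some endomorphism of `M` has
image contained in `C`. -/
def IsCoreOf (L : FirstOrder.Language) (M : Type*) [L.Structure M]
    (C : L.Substructure M) : Prop :=
  IsCore L C ∧ ∃ f : M →[L] M, ∀ x, f x ∈ C

/-- The constraint satisfaction problem of `M`: the class of all finite structures admitting
a homomorphism to `M`. -/
def CSP.{u₁, v₁, w₁, w₂} (L : FirstOrder.Language.{u₁, v₁}) (M : Type w₂) [L.Structure M] :
    Set (Bundled.{w₁} L.Structure) :=
  {C | Finite C ∧ Nonempty (C →[L] M)}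

/-- `f` is an `n`-ary polymorphism of `M`, i.e. a homomorphism from the `n`-th direct power
of `M` to `M`. -/
def IsPolymorphism (L : FirstOrder.Language) {M : Type*} [L.Structure M] {n : ℕ}
    (f : (Fin n → M) → M) : Prop :=
  ∀ {m : ℕ} (R : L.Relations m) (x : Fin n → Fin m → M),
    (∀ j, RelMap R (x j)) → RelMap R (fun i => f (fun j => x j i))

section Stmt18Aux

variable {L : FirstOrder.Language.{u, v}}

/-- In a relational language, every subset of a structure is a substructure. -/
def relSub {X : Type w'''} [L.Structure X] [L.IsRelational] (s : Set X) : L.Substructure X :=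
  ⟨s, fun f => isEmptyElim f⟩

theorem exists_age_hom [L.IsRelational] {X : Type w'''} [L.Structure X]
    {A : Type w} [L.Structure A] [Finite A] (t : A →[L] X) :
    ∃ B ∈ Age.{u, v, w, w'''} L X, Nonempty (A →[L] B) := by
  classical
  letI S : L.Substructure X := relSub (Set.range t)
  haveI : Finite ↥S := (Set.finite_range ⇑t).to_subtype
  let e := equivShrink.{w} ↥S
  refine ⟨e.bundledInduced L,
    ⟨Finite.of_equiv _ e, ⟨S.subtype.comp (e.bundledInducedEquiv L).symm.toEmbedding⟩⟩,
    ⟨((e.bundledInducedEquiv L).toHom).comp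
      (Hom.codRestrict S t (fun a => Set.mem_range_self a))⟩⟩

theorem csp_hom [L.IsRelational] {X : Type w'} {Y : Type w''} [L.Structure X] [L.Structure Y]
    (hsub : CSP.{u, v, w, w'} L X ⊆ CSP.{u, v, w, w''} L Y)
    (S : L.Substructure X) (hS : (S : Set X).Finite) : Nonempty (↥S →[L] Y) := by
  classical
  haveI : Finite ↥S := hS.to_subtype
  let e := equivShrink.{w} ↥S
  have hA : e.bundledInduced L ∈ CSP.{u, v, w, w'} L X :=
    ⟨Finite.of_equiv _ e, ⟨S.subtype.toHom.comp (e.bundledInducedEquiv L).symm.toHom⟩⟩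
  obtain ⟨-, ⟨g⟩⟩ := hsub hA
  exact ⟨g.comp (e.bundledInducedEquiv L).toHom⟩

theorem key_extend [L.IsRelational] {M : Type w'} {N : Type w''} [L.Structure M] [L.Structure N]
    [Countable M] (hN : WeaklyOligomorphic L N)
    (H : ∀ S : L.Substructure M, (S : Set M).Finite → Nonempty (↥S →[L] N)) :
    Nonempty (M →[L] N) := by
  classical
  cases isEmpty_or_nonempty M with
  | inl hme =>
      obtain ⟨g⟩ := H (relSub (∅ : Set M)) Set.finite_empty
      refine ⟨{ toFun := fun x => isEmptyElim x
                map_fun' := fun {n} f => isEmptyElim f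
                map_rel' := ?_ }⟩
      intro n r x
      cases n with
      | zero =>
          intro hx
          have h0 : RelMap r (fun i : Fin 0 => (Fin.elim0 i : ↥(relSub (L := L) (∅ : Set M)))) := by
            show RelMap r (fun i : Fin 0 => ((Fin.elim0 i : ↥(relSub (L := L) (∅ : Set M))) : M))
            convert hx using 2
          have h1 := g.map_rel' r _ h0
          convert h1 using 2
      | succ n => exact fun _ => isEmptyElim (x 0)
  | inr hme =>
    obtain ⟨e, he⟩ := exists_surjective_nat M
    let PH : ∀ n : ℕ, Set (Fin n → N) := fun n =>
      {b | ∀ (m : ℕ) (R : L.Relations m) (σ : Fin m → Fin n),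
        RelMap R (fun k => e ↑(σ k)) → RelMap R (fun k => b (σ k))}
    let orb : ∀ {n : ℕ}, (Fin n → N) → Set (Fin n → N) :=
      fun b => {c | ∃ f : N →[L] N, c = ⇑f ∘ b}
    have orb_self : ∀ {n : ℕ} (b : Fin n → N), b ∈ orb b := fun b =>
      ⟨Hom.id L N, by funext k; simp⟩
    have orb_inv : ∀ {n : ℕ} (b : Fin n → N) (f : N →[L] N), ∀ c ∈ orb b, ⇑f ∘ c ∈ orb b := by
      rintro n b f c ⟨g, rfl⟩
      exact ⟨f.comp g, by funext k; simp [Hom.comp_apply, Function.comp]⟩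
    have PH_endo : ∀ {n : ℕ} (b : Fin n → N), b ∈ PH n → ∀ f : N →[L] N, ⇑f ∘ b ∈ PH n := by
      intro n b hb f m R σ hR
      exact f.map_rel' R _ (hb m R σ hR)
    have orb_sub_PH : ∀ {n : ℕ} (b : Fin n → N), b ∈ PH n → orb b ⊆ PH n := by
      rintro n b hb c ⟨f, rfl⟩
      exact PH_endo b hb f
    have PH_ne : ∀ n : ℕ, ∃ b, b ∈ PH n := by
      intro n
      obtain ⟨g⟩ := H (relSub (Set.range fun k : Fin n => e ↑k)) (Set.finite_range _)
      refine ⟨fun k => g ⟨e ↑k, ⟨k, rfl⟩⟩, ?_⟩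
      intro m R σ hR
      have hx : RelMap R (fun k =>
          (⟨e ↑(σ k), ⟨σ k, rfl⟩⟩ : ↥(relSub (L := L) (Set.range fun k : Fin n => e ↑k)))) := by
        show RelMap R (fun k => e ↑(σ k))
        exact hR
      exact g.map_rel' R _ hx
    let Fo : ℕ → Type w'' := fun n => {S : Set (Fin n → N) // ∃ b ∈ PH n, S = orb b}
    haveI hFoFin : ∀ n : ℕ, Finite (Fo n) := by
      intro n
      have h1 : {S : Set (Fin n → N) | ∃ b ∈ PH n, S = orb b} ⊆
          {ρ : Set (Fin n → N) | ∀ f : N →[L] N, ∀ a ∈ ρ, ⇑f ∘ a ∈ ρ} := by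
        rintro S ⟨b, hb, rfl⟩ f a ha
        exact orb_inv b f a ha
      exact ((hN n).subset h1).to_subtype
    have hFoNe : ∀ n : ℕ, Nonempty (Fo n) := fun n => by
      obtain ⟨b, hb⟩ := PH_ne n
      exact ⟨⟨orb b, b, hb, rfl⟩⟩
    let res : ∀ {n m : ℕ}, n ≤ m → (Fin m → N) → (Fin n → N) :=
      fun h b k => b (Fin.castLE h k)
    have res_orb : ∀ {n m : ℕ} (h : n ≤ m) (b : Fin m → N),
        res h '' orb b = orb (res h b) := by
      intro n m h b
      ext c
      constructor
      · rintro ⟨d, ⟨f, rfl⟩, rfl⟩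
        exact ⟨f, rfl⟩
      · rintro ⟨f, rfl⟩
        exact ⟨⇑f ∘ b, ⟨f, rfl⟩, rfl⟩
    have res_PH : ∀ {n m : ℕ} (h : n ≤ m) (b : Fin m → N), b ∈ PH m → res h b ∈ PH n := by
      intro n m h b hb mm R σ hR
      exact hb mm R (fun k => Fin.castLE h (σ k)) hR
    let Fmap : ∀ n : ℕ, Fo (n + 1) → Fo n := fun n S =>
      ⟨res (Nat.le_succ n) '' S.1, by
        obtain ⟨b, hb, hS⟩ := S.2
        exact ⟨res (Nat.le_succ n) b, res_PH _ b hb, by rw [hS, res_orb]⟩⟩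
    let F : ℕᵒᵖ ⥤ Type w'' := CategoryTheory.Functor.ofOpSequence (fun n => TypeCat.ofHom (Fmap n))
    haveI : ∀ j : ℕᵒᵖ, Finite (F.obj j) := fun j => hFoFin j.unop
    haveI : ∀ j : ℕᵒᵖ, Nonempty (F.obj j) := fun j => hFoNe j.unop
    obtain ⟨uu, huu⟩ := nonempty_sections_of_finite_inverse_system F
    have hstep : ∀ n : ℕ, Fmap n (uu (Opposite.op (n + 1))) = uu (Opposite.op n) := by
      intro n
      have h1 := huu (j := Opposite.op (n + 1)) (j' := Opposite.op n)
        (CategoryTheory.homOfLE (Nat.le_add_right n 1)).op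
      rwa [CategoryTheory.Functor.ofOpSequence_map_homOfLE_succ] at h1
    have step : ∀ n : ℕ, ∀ b ∈ (uu (Opposite.op n)).1,
        ∃ d, d ∈ (uu (Opposite.op (n + 1))).1 ∧ res (Nat.le_succ n) d = b := by
      intro n b hb
      rw [← hstep n] at hb
      obtain ⟨d, hd, hdb⟩ := hb
      exact ⟨d, hd, hdb⟩
    choose nxt hnxt1 hnxt2 using step
    obtain ⟨b0, hb0⟩ : ∃ b, b ∈ (uu (Opposite.op 0)).1 := by
      obtain ⟨b, hb, hS⟩ := (uu (Opposite.op 0)).2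
      exact ⟨b, hS ▸ orb_self b⟩
    let c : ∀ n : ℕ, {b : Fin n → N // b ∈ (uu (Opposite.op n)).1} := fun n =>
      Nat.rec ⟨b0, hb0⟩ (fun n p => ⟨nxt n p.1 p.2, hnxt1 n p.1 p.2⟩) n
    have hres : ∀ n : ℕ, res (Nat.le_succ n) (c (n + 1)).1 = (c n).1 := fun n =>
      hnxt2 n (c n).1 (c n).2
    have hPHc : ∀ n : ℕ, (c n).1 ∈ PH n := by
      intro n
      obtain ⟨b, hb, hS⟩ := (uu (Opposite.op n)).2
      exact orb_sub_PH b hb (hS ▸ (c n).2)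
    have hcoh : ∀ (n m : ℕ) (h : n ≤ m) (k : Fin n),
        (c m).1 (Fin.castLE h k) = (c n).1 k := by
      intro n m h
      induction h with
      | refl => exact fun k => congrArg _ (Fin.ext rfl)
      | @step m h ih =>
          intro k
          rw [show Fin.castLE (Nat.le_succ_of_le h) k =
            Fin.castLE (Nat.le_succ m) (Fin.castLE h k) from Fin.ext rfl]
          exact (congrFun (hres m) (Fin.castLE h k)).trans (ih k)
    let idx : M → ℕ := Function.surjInv he
    have hidx : ∀ x, e (idx x) = x := Function.surjInv_eq he
    refine ⟨{ toFun := fun x => (c (idx x + 1)).1 ⟨idx x, Nat.lt_succ_self _⟩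
              map_fun' := fun {n} f => isEmptyElim f
              map_rel' := ?_ }⟩
    intro m R x hx
    have hlt : ∀ j : Fin m, idx (x j) < (Finset.univ.sup fun j : Fin m => idx (x j)) + 1 :=
      fun j => Nat.lt_succ_of_le (Finset.le_sup (f := fun j : Fin m => idx (x j)) (Finset.mem_univ j))
    set nn : ℕ := (Finset.univ.sup fun j : Fin m => idx (x j)) + 1 with hnn
    have h1 : RelMap R (fun j : Fin m => e ↑(⟨idx (x j), hlt j⟩ : Fin nn)) := by
      have hxx : (fun j : Fin m => e ↑(⟨idx (x j), hlt j⟩ : Fin nn)) = x :=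
        funext fun j => hidx (x j)
      rw [hxx]; exact hx
    have h2 := hPHc nn m R (fun j => ⟨idx (x j), hlt j⟩) h1
    have h3 : (fun j : Fin m => (c nn).1 ⟨idx (x j), hlt j⟩) =
        (fun y : M => (c (idx y + 1)).1 ⟨idx y, Nat.lt_succ_self _⟩) ∘ x := by
      funext j
      exact hcoh (idx (x j) + 1) nn (hlt j) ⟨idx (x j), Nat.lt_succ_self _⟩
    rw [h3] at h2
    exact h2

end Stmt18Aux

/-- For countable weakly oligomorphic structures `M`, `N` over the same language
the following are equivalent: (1) `M` and `N` are homomorphism-equivalent; (2) their ages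
project onto each other; (3) `CSP M = CSP N`. -/
theorem stmt18 (L : FirstOrder.Language.{u, v}) [L.IsRelational]
    (M : Type w') (N : Type w'') [L.Structure M] [L.Structure N]
    [Countable M] [Countable N]
    (hM : WeaklyOligomorphic L M) (hN : WeaklyOligomorphic L N) :
    ((Nonempty (M →[L] N) ∧ Nonempty (N →[L] M)) ↔
      (ProjectsOnto L (Age.{u, v, w, w'} L M) (Age.{u, v, w, w''} L N) ∧
        ProjectsOnto L (Age.{u, v, w, w''} L N) (Age.{u, v, w, w'} L M))) ∧
    ((Nonempty (M →[L] N) ∧ Nonempty (N →[L] M)) ↔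
      CSP.{u, v, w, w'} L M = CSP.{u, v, w, w''} L N) := by
  have h12 : (Nonempty (M →[L] N) ∧ Nonempty (N →[L] M)) →
      (ProjectsOnto L (Age.{u, v, w, w'} L M) (Age.{u, v, w, w''} L N) ∧
        ProjectsOnto L (Age.{u, v, w, w''} L N) (Age.{u, v, w, w'} L M)) := by
    rintro ⟨⟨f⟩, ⟨g⟩⟩
    constructor
    · rintro A ⟨hAfin, ⟨emb⟩⟩
      haveI := hAfin
      exact exists_age_hom (f.comp emb.toHom)
    · rintro A ⟨hAfin, ⟨emb⟩⟩
      haveI := hAfin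
      exact exists_age_hom (g.comp emb.toHom)
  have h23 : (ProjectsOnto L (Age.{u, v, w, w'} L M) (Age.{u, v, w, w''} L N) ∧
        ProjectsOnto L (Age.{u, v, w, w''} L N) (Age.{u, v, w, w'} L M)) →
      CSP.{u, v, w, w'} L M = CSP.{u, v, w, w''} L N := by
    rintro ⟨hMN, hNM⟩
    ext C
    constructor
    · rintro ⟨hCfin, ⟨t⟩⟩
      haveI := hCfin
      obtain ⟨B, hB, ⟨g1⟩⟩ := exists_age_hom t
      obtain ⟨B', hB', ⟨g2⟩⟩ := hMN B hB
      obtain ⟨emb⟩ := hB'.2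
      exact ⟨hCfin, ⟨(emb.toHom.comp g2).comp g1⟩⟩
    · rintro ⟨hCfin, ⟨t⟩⟩
      haveI := hCfin
      obtain ⟨B, hB, ⟨g1⟩⟩ := exists_age_hom t
      obtain ⟨B', hB', ⟨g2⟩⟩ := hNM B hB
      obtain ⟨emb⟩ := hB'.2
      exact ⟨hCfin, ⟨(emb.toHom.comp g2).comp g1⟩⟩
  have h31 : CSP.{u, v, w, w'} L M = CSP.{u, v, w, w''} L N →
      (Nonempty (M →[L] N) ∧ Nonempty (N →[L] M)) := by
    intro hcsp
    constructor
    · exact key_extend hN (fun S hS => csp_hom (le_of_eq hcsp) S hS)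
    · exact key_extend hM (fun S hS => csp_hom (le_of_eq hcsp.symm) S hS)
  exact ⟨⟨h12, fun h2 => h31 (h23 h2)⟩, ⟨fun h1 => h23 (h12 h1), h31⟩⟩
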